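/- arXiv:2107.01240 — 7 statements merged into one kernel-verified Lean document; each statement's English description precedes it below -/
import Mathlib

section
/- Let n > 2, m₁ > ... > mₙ > 0, m_{s-1} > 1+r ≥ m_s with s ∈ {2,...,n} and 1+r ≠ mₙ, I = {1,...,s-1}, J = {s,...,n}. Every solution of the system Σₖ qₖ = 1, Σₖ m_k qₖ = 1+r, qₖ ≥ 0 is a convex combination of the measures Q_{i,j} (i ∈ I, j ∈ J) defined by Q_{i,j}({i}) = ((1+r)−m_j)/(m_i−m_j), Q_{i,j}({j}) = (m_i−(1+r))/(m_i−m_j), and 0 elsewhere; i.e., the extreme points of the closed set of martingale measures are exactly the Q_{i,j}. -/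
/-!
Put `c = 1 + r`; the martingale condition says `∑ q_k (m_k - c) = 0`, so the excess
`A = ∑_{m_i > c} q_i (m_i - c)` also equals `∑_{m_j ≤ c} q_j (c - m_j)`.
Since `(m_i - m_j) Q_{i,j} = (c - m_j) δ_i + (m_i - c) δ_j`, the weights
`w_{i,j} = q_i q_j (m_i - m_j) / A` on `{m_i > c} × {m_j ≤ c}` give back `q_k A / A` at every `k`
when `A > 0`. When `A = 0`, `q` lives on `{m_j = c}`, where `Q_{i₀,j} = δ_j` for any `i₀` with
`m_{i₀} > c`, so `w_{i₀,j} = q_j` works. As `m` decreases and `m_{s-1} > c ≥ m_s`, the sets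
`{m_i > c}` and `{m_j ≤ c}` are exactly `I` and `J`.
-/

open Finset

namespace TwoPoint

variable {ι : Type*}

section Measure

variable [DecidableEq ι]

noncomputable def measure (m : ι → ℝ) (c : ℝ) (i j k : ι) : ℝ :=
  if k = i then (c - m j) / (m i - m j) else if k = j then (m i - c) / (m i - m j) else 0

theorem sub_mul_measure {m : ι → ℝ} {i j : ι} (h : m i ≠ m j) (c : ℝ) (k : ι) :
    (m i - m j) * measure m c i j k =
      (if k = i then c - m j else 0) + (if k = j then m i - c else 0) := by
  have hij : i ≠ j := fun hij => h (congrArg m hij)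
  have hsub : m i - m j ≠ 0 := sub_ne_zero.mpr h
  unfold measure
  split_ifs with hki hkj hkj
  · exact absurd (hki.symm.trans hkj) hij
  all_goals field_simp
  all_goals ring

theorem mul_measure_of_mul_sub_eq_zero {m : ι → ℝ} {c a : ℝ} {i j : ι} (hi : c < m i)
    (ha : a * (c - m j) = 0) (k : ι) : a * measure m c i j k = if k = j then a else 0 := by
  obtain rfl | hj := eq_or_ne a 0
  · simp
  have hj : m j = c := by linarith [(mul_eq_zero.mp ha).resolve_left hj]
  have hij : i ≠ j := by rintro rfl; linarith
  have hsub : m i - c ≠ 0 := by linarith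
  unfold measure
  split_ifs with hki hkj
  · exact absurd (hki.symm.trans hkj) hij
  all_goals simp [hj, hsub]

end Measure

section Excess

variable [Fintype ι]

noncomputable def above (m : ι → ℝ) (c : ℝ) : Finset ι := univ.filter (c < m ·)

noncomputable def atOrBelow (m : ι → ℝ) (c : ℝ) : Finset ι := univ.filter (m · ≤ c)

@[simp]
theorem mem_above {m : ι → ℝ} {c : ℝ} {k : ι} : k ∈ above m c ↔ c < m k := by
  simp [above]

@[simp]
theorem mem_atOrBelow {m : ι → ℝ} {c : ℝ} {k : ι} : k ∈ atOrBelow m c ↔ m k ≤ c := by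
  simp [atOrBelow]

theorem sum_above_add_sum_atOrBelow (m : ι → ℝ) (c : ℝ) (f : ι → ℝ) :
    ∑ k ∈ above m c, f k + ∑ k ∈ atOrBelow m c, f k = ∑ k, f k := by
  simp only [above, atOrBelow, ← not_lt]
  exact sum_filter_add_sum_filter_not _ _ _

theorem sum_sum_ite_above_atOrBelow (m : ι → ℝ) (c : ℝ) (f : ι → ι → ℝ) :
    ∑ i, ∑ j, (if c < m i ∧ m j ≤ c then f i j else 0) =
      ∑ i ∈ above m c, ∑ j ∈ atOrBelow m c, f i j := by
  simp only [above, atOrBelow, sum_filter, ite_and, ite_sum_zero]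

noncomputable def excess (m : ι → ℝ) (c : ℝ) (q : ι → ℝ) : ℝ :=
  ∑ k ∈ above m c, q k * (m k - c)

variable {m : ι → ℝ} {c : ℝ} {q : ι → ℝ}

theorem excess_nonneg (hq0 : ∀ k, 0 ≤ q k) : 0 ≤ excess m c q :=
  sum_nonneg fun k hk => mul_nonneg (hq0 k) (sub_nonneg.mpr (mem_above.mp hk).le)

theorem sum_atOrBelow_eq_excess (hq1 : ∑ k, q k = 1) (hqm : ∑ k, m k * q k = c) :
    ∑ k ∈ atOrBelow m c, q k * (c - m k) = excess m c q := by
  have hzero : ∑ k, q k * (m k - c) = 0 := by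
    calc ∑ k, q k * (m k - c) = ∑ k, m k * q k - c * ∑ k, q k := by
          rw [mul_sum, ← sum_sub_distrib]
          exact sum_congr rfl fun k _ => by ring
      _ = 0 := by rw [hq1, hqm, mul_one, sub_self]
  rw [← sum_above_add_sum_atOrBelow m c] at hzero
  rw [excess, eq_neg_of_add_eq_zero_left hzero, ← sum_neg_distrib]
  exact sum_congr rfl fun k _ => by ring

theorem eq_zero_of_excess_eq_zero (hq0 : ∀ k, 0 ≤ q k) (hA : excess m c q = 0) {k : ι}
    (hk : k ∈ above m c) : q k = 0 := by
  have hterm := (sum_eq_zero_iff_of_nonneg fun k hk =>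
    mul_nonneg (hq0 k) (sub_nonneg.mpr (mem_above.mp hk).le)).mp hA k hk
  exact (mul_eq_zero.mp hterm).resolve_right (sub_ne_zero.mpr (mem_above.mp hk).ne')

theorem mul_sub_eq_zero_of_excess_eq_zero (hq0 : ∀ k, 0 ≤ q k) (hq1 : ∑ k, q k = 1)
    (hqm : ∑ k, m k * q k = c) (hA : excess m c q = 0) {k : ι} (hk : k ∈ atOrBelow m c) :
    q k * (c - m k) = 0 :=
  (sum_eq_zero_iff_of_nonneg fun j hj =>
    mul_nonneg (hq0 j) (sub_nonneg.mpr (mem_atOrBelow.mp hj))).mp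
      ((sum_atOrBelow_eq_excess hq1 hqm).trans hA) k hk

end Excess

section Decomposition

variable [Fintype ι] [DecidableEq ι]

structure IsDecomposition (m : ι → ℝ) (c : ℝ) (q : ι → ℝ) (w : ι → ι → ℝ) :
    Prop where
  nonneg : ∀ i j, 0 ≤ w i j
  support : ∀ i j, w i j ≠ 0 → c < m i ∧ m j ≤ c
  sum_eq_one : ∑ i, ∑ j, w i j = 1
  eq_sum : ∀ k, q k = ∑ i, ∑ j, w i j * measure m c i j k

variable {m : ι → ℝ} {c : ℝ} {q : ι → ℝ}

theorem isDecomposition_of_excess_pos (hq0 : ∀ k, 0 ≤ q k) (hq1 : ∑ k, q k = 1)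
    (hqm : ∑ k, m k * q k = c) (hA : 0 < excess m c q) :
    IsDecomposition m c q fun i j =>
      if c < m i ∧ m j ≤ c then q i * q j * (m i - m j) / excess m c q else 0 where
  nonneg i j := by
    split_ifs with h
    · exact div_nonneg (mul_nonneg (mul_nonneg (hq0 i) (hq0 j)) (by linarith [h.1, h.2])) hA.le
    · exact le_rfl
  support i j h := by
    split_ifs at h with hij
    · exact hij
    · exact absurd rfl h
  sum_eq_one := by
    set A := excess m c q
    rw [sum_sum_ite_above_atOrBelow]
    calc ∑ i ∈ above m c, ∑ j ∈ atOrBelow m c, q i * q j * (m i - m j) / A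
        = (∑ i ∈ above m c, ∑ j ∈ atOrBelow m c,
            (q i * (m i - c) * q j + q i * (q j * (c - m j)))) / A := by
          simp only [sum_div]
          exact sum_congr rfl fun i _ => sum_congr rfl fun j _ => by ring
      _ = (A * ∑ j ∈ atOrBelow m c, q j + (∑ i ∈ above m c, q i) * A) / A := by
          simp only [sum_add_distrib, ← mul_sum, ← sum_mul, sum_atOrBelow_eq_excess hq1 hqm]
          rfl
      _ = 1 := by
          rw [mul_comm A, ← add_mul, add_comm, sum_above_add_sum_atOrBelow, hq1, one_mul,
            div_self hA.ne']
  eq_sum k := by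
    set A := excess m c q
    have hterm : ∀ i ∈ above m c, ∀ j ∈ atOrBelow m c,
        q i * q j * (m i - m j) / A * measure m c i j k =
          (if k = i then q k * (q j * (c - m j)) / A else 0) +
            (if k = j then q k * (q i * (m i - c)) / A else 0) := by
      intro i hi j hj
      have hne : m i ≠ m j := by
        linarith [mem_above.mp hi, mem_atOrBelow.mp hj]
      rw [show q i * q j * (m i - m j) / A * measure m c i j k =
          q i * q j / A * ((m i - m j) * measure m c i j k) by ring, sub_mul_measure hne]
      split_ifs <;> subst_vars <;> ring
    rw [eq_comm]
    calc ∑ i, ∑ j, (if c < m i ∧ m j ≤ c then q i * q j * (m i - m j) / A else 0) *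
          measure m c i j k
        = ∑ i ∈ above m c, ∑ j ∈ atOrBelow m c,
            ((if k = i then q k * (q j * (c - m j)) / A else 0) +
              (if k = j then q k * (q i * (m i - c)) / A else 0)) := by
          simp only [ite_mul, zero_mul, sum_sum_ite_above_atOrBelow]
          exact sum_congr rfl fun i hi => sum_congr rfl fun j hj => hterm i hi j hj
      _ = (if k ∈ above m c then q k * A / A else 0) +
            (if k ∈ atOrBelow m c then q k * A / A else 0) := by
          simp only [sum_add_distrib]
          rw [sum_comm (s := above m c) (t := atOrBelow m c)
            (f := fun i j => if k = j then q k * (q i * (m i - c)) / A else 0)]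
          simp only [← ite_sum_zero, sum_ite_eq, ← mul_sum, ← sum_div,
            sum_atOrBelow_eq_excess hq1 hqm]
          rfl
      _ = q k := by
          rw [mul_div_cancel_right₀ _ hA.ne']
          rcases lt_or_ge c (m k) with hk | hk
          · simp [hk, hk.not_ge]
          · simp [hk, hk.not_gt]

theorem isDecomposition_of_excess_eq_zero (hq0 : ∀ k, 0 ≤ q k) (hq1 : ∑ k, q k = 1)
    (hqm : ∑ k, m k * q k = c) (hA : excess m c q = 0) {i₀ : ι} (hi₀ : c < m i₀) :
    IsDecomposition m c q fun i j => if i = i₀ ∧ m j ≤ c then q j else 0 := by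
  have hsum_atOrBelow : ∑ j ∈ atOrBelow m c, q j = 1 := by
    rw [← hq1, ← sum_above_add_sum_atOrBelow m c,
      sum_eq_zero fun k hk => eq_zero_of_excess_eq_zero hq0 hA hk, zero_add]
  refine ⟨fun i j => ?_, fun i j h => ?_, ?_, fun k => ?_⟩
  · split_ifs
    exacts [hq0 j, le_rfl]
  · split_ifs at h with hij
    · exact ⟨hij.1 ▸ hi₀, hij.2⟩
    · exact absurd rfl h
  · simp only [ite_and, ← ite_sum_zero, sum_ite_eq', mem_univ, if_true, ← sum_filter]
    exact hsum_atOrBelow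
  · simp only [ite_mul, zero_mul, ite_and, ← ite_sum_zero, sum_ite_eq', mem_univ, if_true,
      ← sum_filter]
    change q k = ∑ j ∈ atOrBelow m c, q j * measure m c i₀ j k
    rw [sum_congr rfl fun j hj => mul_measure_of_mul_sub_eq_zero hi₀
      (mul_sub_eq_zero_of_excess_eq_zero hq0 hq1 hqm hA hj) k, sum_ite_eq]
    split_ifs with hk
    · rfl
    · exact eq_zero_of_excess_eq_zero hq0 hA (by simpa using hk)

theorem exists_isDecomposition (hq0 : ∀ k, 0 ≤ q k) (hq1 : ∑ k, q k = 1)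
    (hqm : ∑ k, m k * q k = c) (hc : ∃ i, c < m i) : ∃ w, IsDecomposition m c q w := by
  obtain hA | hA := (excess_nonneg (m := m) (c := c) hq0).lt_or_eq
  · exact ⟨_, isDecomposition_of_excess_pos hq0 hq1 hqm hA⟩
  · exact ⟨_, isDecomposition_of_excess_eq_zero hq0 hq1 hqm hA.symm hc.choose_spec⟩

end Decomposition

end TwoPoint

/-- Every solution of the martingale system in the n-nomial model is a convex
combination of the extreme measures `Q_{i,j}`, `i ∈ I`, `j ∈ J`. -/
theorem martingale_measure_convex_combination (n : ℕ) (m : Fin n → ℝ)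
    (hm : StrictAnti m) (r : ℝ)
    (s : Fin n)
    (h1 : 1 + r < m ⟨s.val - 1, Nat.lt_of_le_of_lt (Nat.sub_le _ _) s.isLt⟩)
    (h2 : m s ≤ 1 + r)
    (q : Fin n → ℝ) (hq0 : ∀ k, 0 ≤ q k) (hq1 : ∑ k, q k = 1)
    (hqm : ∑ k, m k * q k = 1 + r) :
    let Q : Fin n → Fin n → Fin n → ℝ := fun i j k =>
      if k = i then ((1 + r) - m j) / (m i - m j)
      else if k = j then (m i - (1 + r)) / (m i - m j) else 0
    ∃ w : Fin n → Fin n → ℝ,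
      (∀ i j, 0 ≤ w i j) ∧
      (∀ i j, w i j ≠ 0 → i.val < s.val ∧ s.val ≤ j.val) ∧
      (∑ i, ∑ j, w i j) = 1 ∧
      (∀ k, q k = ∑ i, ∑ j, w i j * Q i j k) := by
  intro Q
  obtain ⟨w, hw⟩ := TwoPoint.exists_isDecomposition hq0 hq1 hqm ⟨_, h1⟩
  refine ⟨w, hw.nonneg, fun i j hij => ?_, hw.sum_eq_one, hw.eq_sum⟩
  obtain ⟨hi, hj⟩ := hw.support i j hij
  constructor
  · by_contra! hsi
    linarith [hm.antitone hsi]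
  · by_contra! hjs
    have hle : j ≤ ⟨s.val - 1, Nat.lt_of_le_of_lt (Nat.sub_le _ _) s.isLt⟩ := by
      rw [Fin.le_def]
      dsimp only
      omega
    linarith [hm.antitone hle]
end

section
/- Let n > 2, m₁ > ... > mₙ > 0, m_{s-1} > 1+r > m_s for some s ∈ {2,...,n} (with 1+r ≠ mₙ), I = {1,...,s-1}, J = {s,...,n}. Then for any subset A ⊆ Ω with I ⊆ A ≠ Ω, the minimum of Q(A) over all probability measures Q satisfying Σₖ m_k Q({k}) = 1+r and Q ≥ 0 equals ((1+r) − m_j̲)/(m₁ − m_j̲), where j̲ = min{j ∈ J : j ∉ A}. -/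
/-!
A measure `q` with barycenter `∑ m k q k = c` puts mass `p` on `A` and `1 - p` off it. If the prices
are at most `M` on `A` and at most `μ < M` off `A`, then `c ≤ M p + μ (1 - p)`, i.e.
`p ≥ (c - μ) / (M - μ)`. Here `M = m₁` (as `1 ∈ I ⊆ A`) and `μ = m j̲` (every `k ∉ A` lies in `J`
beyond `j̲`), and the bound is attained by the measure on `{1, j̲}` with barycenter `1 + r`.
-/

open Finset

section TwoPrices

variable {ι : Type*} [Fintype ι] {m q : ι → ℝ} {A : Finset ι} {c M μ : ℝ}

theorem sub_div_sub_le_sum_of_barycenter (hq : ∀ k, 0 ≤ q k) (hq1 : ∑ k, q k = 1)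
    (hqm : ∑ k, m k * q k = c) (hA : ∀ k ∈ A, m k ≤ M) (hAc : ∀ k ∉ A, m k ≤ μ)
    (hμM : μ < M) : (c - μ) / (M - μ) ≤ ∑ k ∈ A, q k := by
  classical
  have hmass : ∑ k ∈ Aᶜ, q k = 1 - ∑ k ∈ A, q k := by
    rw [← hq1, ← sum_add_sum_compl A q, add_sub_cancel_left]
  have hinA : ∑ k ∈ A, m k * q k ≤ M * ∑ k ∈ A, q k := by
    rw [mul_sum]
    exact sum_le_sum fun k hk => mul_le_mul_of_nonneg_right (hA k hk) (hq k)
  have hnotinA : ∑ k ∈ Aᶜ, m k * q k ≤ μ * ∑ k ∈ Aᶜ, q k := by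
    rw [mul_sum]
    exact sum_le_sum fun k hk => mul_le_mul_of_nonneg_right (hAc k (mem_compl.mp hk)) (hq k)
  have hc : c ≤ M * ∑ k ∈ A, q k + μ * (1 - ∑ k ∈ A, q k) := by
    rw [← hqm, ← sum_add_sum_compl A, ← hmass]
    exact add_le_add hinA hnotinA
  rw [div_le_iff₀ (sub_pos.mpr hμM)]
  linarith

theorem exists_two_point_of_barycenter [DecidableEq ι] {i j : ι} (hi : i ∈ A) (hj : j ∉ A)
    (hjc : m j ≤ c) (hci : c ≤ m i) (hji : m j < m i) :
    ∃ q : ι → ℝ, (∀ k, 0 ≤ q k) ∧ ∑ k, q k = 1 ∧ ∑ k, m k * q k = c ∧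
      ∑ k ∈ A, q k = (c - m j) / (m i - m j) := by
  have hden : 0 < m i - m j := sub_pos.mpr hji
  set a := (c - m j) / (m i - m j)
  set b := (m i - c) / (m i - m j)
  refine ⟨Pi.single i a + Pi.single j b, fun k => ?_, ?_, ?_, ?_⟩
  · have ha : 0 ≤ a := div_nonneg (sub_nonneg.mpr hjc) hden.le
    have hb : 0 ≤ b := div_nonneg (sub_nonneg.mpr hci) hden.le
    simp only [Pi.add_apply, Pi.single_apply]
    split_ifs <;> linarith
  · simp only [Pi.add_apply, sum_add_distrib, Fintype.sum_pi_single', a, b]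
    field_simp
    ring
  · simp only [Pi.add_apply, mul_add, sum_add_distrib, Pi.single_apply, mul_ite, mul_zero,
      Fintype.sum_ite_eq', a, b]
    field_simp
    ring
  · simp only [Pi.add_apply, sum_add_distrib, Pi.single_apply, sum_ite_eq', hi, hj,
      if_true, if_false, add_zero]

theorem isLeast_sum_of_barycenter [DecidableEq ι] {i j : ι} (hi : i ∈ A) (hj : j ∉ A)
    (hjc : m j ≤ c) (hci : c ≤ m i) (hji : m j < m i) (hA : ∀ k ∈ A, m k ≤ m i)
    (hAc : ∀ k ∉ A, m k ≤ m j) :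
    IsLeast {x : ℝ | ∃ q : ι → ℝ, (∀ k, 0 ≤ q k) ∧ (∑ k, q k) = 1 ∧
        (∑ k, m k * q k) = c ∧ x = ∑ k ∈ A, q k}
      ((c - m j) / (m i - m j)) := by
  refine ⟨?_, ?_⟩
  · obtain ⟨q, hq, hq1, hqm, hqA⟩ := exists_two_point_of_barycenter hi hj hjc hci hji
    exact ⟨q, hq, hq1, hqm, hqA.symm⟩
  · rintro x ⟨q, hq, hq1, hqm, rfl⟩
    exact sub_div_sub_le_sum_of_barycenter hq hq1 hqm hA hAc hji

end TwoPrices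

/-- Lower envelope of martingale measures on a set `A` with `I ⊆ A ≠ Ω`:
the minimum of `Q(A)` equals `((1+r) - m j̲)/(m 1 - m j̲)` where `j̲` is the least
element of `J` not in `A`. -/
theorem lower_envelope_I_subset (n : ℕ) (m : Fin n → ℝ)
    (hm : StrictAnti m) (r : ℝ)
    (s : Fin n) (hs : 1 ≤ s.val)
    (h1 : 1 + r < m ⟨s.val - 1, Nat.lt_of_le_of_lt (Nat.sub_le _ _) s.isLt⟩)
    (h2 : m s < 1 + r)
    (A : Finset (Fin n)) (hIA : ∀ i : Fin n, i.val < s.val → i ∈ A)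
    (j0 : Fin n) (hj0J : s.val ≤ j0.val) (hj0A : j0 ∉ A)
    (hj0min : ∀ j : Fin n, s.val ≤ j.val → j ∉ A → j0 ≤ j) :
    IsLeast {x : ℝ | ∃ q : Fin n → ℝ, (∀ k, 0 ≤ q k) ∧ (∑ k, q k) = 1 ∧
        (∑ k, m k * q k) = 1 + r ∧ x = ∑ k ∈ A, q k}
      (((1 + r) - m j0) / (m ⟨0, by omega⟩ - m j0)) := by
  have hmax : ∀ k, m k ≤ m ⟨0, by omega⟩ := fun k => hm.antitone (Fin.le_def.mpr (Nat.zero_le _))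
  have hjc : m j0 ≤ 1 + r := (hm.antitone (Fin.le_def.mpr hj0J)).trans h2.le
  have hci : 1 + r ≤ m ⟨0, by omega⟩ := h1.le.trans (hmax _)
  have hji : m j0 < m ⟨0, by omega⟩ := hm (Fin.lt_def.mpr (show 0 < j0.val by omega))
  have hAc : ∀ k ∉ A, m k ≤ m j0 := fun k hk =>
    hm.antitone (hj0min k (not_lt.mp fun hks => hk (hIA k hks)) hk)
  exact isLeast_sum_of_barycenter (hIA _ hs) hj0A hjc hci hji (fun k _ => hmax k) hAc
end

section
/- Let n > 2, m₁ > ... > mₙ > 0, m_{s-1} > 1+r ≥ m_s for some s ∈ {2,...,n} with 1+r ≠ mₙ, I = {1,...,s-1}, J = {s,...,n}. Then for any A ⊆ Ω with J ⊆ A ≠ Ω, the minimum of Q(A) over all probability measures Q with Σₖ m_k Q({k}) = 1+r and Q ≥ 0 equals (m_ī − (1+r))/(m_ī − mₙ), where ī = max{i ∈ I : i ∉ A}. -/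
/-!
Write `x = Q(A)`. States in `A` have `m k ≥ mₙ` and, by maximality of `ī`, states outside `A`
have `m k ≥ m ī`; hence `1 + r = ∑ m k Q{k} ≥ mₙ x + m ī (1 - x)`, which is the lower bound.
It is attained by the martingale measure supported on the two states `ī ∉ A` and `n ∈ A`.
-/

open Finset

variable {ι : Type*} [Fintype ι]

def martingaleMasses (m : ι → ℝ) (c : ℝ) (A : Finset ι) : Set ℝ :=
  {x | ∃ q : ι → ℝ, (∀ k, 0 ≤ q k) ∧ (∑ k, q k) = 1 ∧ (∑ k, m k * q k) = c ∧ x = ∑ k ∈ A, q k}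

theorem div_le_of_mem_martingaleMasses {m : ι → ℝ} {c b M : ℝ} {A : Finset ι}
    (hbM : b < M) (hA : ∀ k ∈ A, b ≤ m k) (hAc : ∀ k ∉ A, M ≤ m k)
    {x : ℝ} (hx : x ∈ martingaleMasses m c A) : (M - c) / (M - b) ≤ x := by
  classical
  obtain ⟨q, hq, hq1, hqm, rfl⟩ := hx
  have hmass : ∑ k ∈ A, q k + ∑ k ∈ Aᶜ, q k = 1 := by rw [sum_add_sum_compl, hq1]
  have hmean : ∑ k ∈ A, m k * q k + ∑ k ∈ Aᶜ, m k * q k = c := by rw [sum_add_sum_compl, hqm]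
  have hin : b * ∑ k ∈ A, q k ≤ ∑ k ∈ A, m k * q k := by
    rw [mul_sum]
    exact sum_le_sum fun k hk => mul_le_mul_of_nonneg_right (hA k hk) (hq k)
  have hout : M * ∑ k ∈ Aᶜ, q k ≤ ∑ k ∈ Aᶜ, m k * q k := by
    rw [mul_sum]
    exact sum_le_sum fun k hk => mul_le_mul_of_nonneg_right (hAc k (mem_compl.1 hk)) (hq k)
  rw [eq_sub_of_add_eq' hmass] at hout
  rw [div_le_iff₀ (sub_pos.2 hbM)]
  linarith

theorem div_mem_martingaleMasses {m : ι → ℝ} {c : ℝ} {A : Finset ι} {i j : ι}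
    (hji : m j < m i) (hjc : m j ≤ c) (hci : c ≤ m i) (hi : i ∉ A) (hj : j ∈ A) :
    (m i - c) / (m i - m j) ∈ martingaleMasses m c A := by
  classical
  have hden : m i - m j ≠ 0 := (sub_pos.2 hji).ne'
  set p := (c - m j) / (m i - m j)
  have hp : p * (m i - m j) = c - m j := div_mul_cancel₀ _ hden
  refine ⟨Pi.single i p + Pi.single j (1 - p), fun k => ?_, ?_, ?_, ?_⟩
  · have hp0 : 0 ≤ p := div_nonneg (by linarith) (by linarith)
    have hp1 : p ≤ 1 := (div_le_one (by linarith)).2 (by linarith)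
    simp only [Pi.add_apply, Pi.single_apply]
    split_ifs <;> linarith
  · simp [sum_add_distrib]
  · simp only [Pi.add_apply, Pi.single_apply, mul_add, mul_ite, mul_zero, sum_add_distrib,
      sum_ite_eq', mem_univ, if_true]
    linear_combination hp
  · simp only [Pi.add_apply, Pi.single_apply, sum_add_distrib, sum_ite_eq', hi, hj, if_true,
      if_false]
    field_simp
    linear_combination hp

theorem isLeast_martingaleMasses {m : ι → ℝ} {c : ℝ} {A : Finset ι} {i j : ι}
    (hji : m j < m i) (hjc : m j ≤ c) (hci : c ≤ m i) (hi : i ∉ A) (hj : j ∈ A)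
    (hA : ∀ k ∈ A, m j ≤ m k) (hAc : ∀ k ∉ A, m i ≤ m k) :
    IsLeast (martingaleMasses m c A) ((m i - c) / (m i - m j)) :=
  ⟨div_mem_martingaleMasses hji hjc hci hi hj, fun _ => div_le_of_mem_martingaleMasses hji hA hAc⟩

/-- Lower envelope of martingale measures on a set `A` with `J ⊆ A ≠ Ω`:
the minimum of `Q(A)` equals `(m ī - (1+r))/(m ī - m n)` where `ī` is the greatest
element of `I` not in `A`. -/
theorem lower_envelope_J_subset (n : ℕ) (hn : 2 < n) (m : Fin n → ℝ)
    (hm : StrictAnti m) (r : ℝ)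
    (s : Fin n)
    (h1 : 1 + r < m ⟨s.val - 1, Nat.lt_of_le_of_lt (Nat.sub_le _ _) s.isLt⟩)
    (h2 : m s ≤ 1 + r)
    (A : Finset (Fin n)) (hJA : ∀ j : Fin n, s.val ≤ j.val → j ∈ A)
    (i0 : Fin n) (hi0I : i0.val < s.val) (hi0A : i0 ∉ A)
    (hi0max : ∀ i : Fin n, i.val < s.val → i ∉ A → i ≤ i0) :
    IsLeast {x : ℝ | ∃ q : Fin n → ℝ, (∀ k, 0 ≤ q k) ∧ (∑ k, q k) = 1 ∧
        (∑ k, m k * q k) = 1 + r ∧ x = ∑ k ∈ A, q k}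
      ((m i0 - (1 + r)) / (m i0 - m ⟨n - 1, by omega⟩)) := by
  set last : Fin n := ⟨n - 1, by omega⟩
  have hle_last : ∀ k : Fin n, k ≤ last := fun k => Fin.le_def.2 (by simp [last]; omega)
  have hi0_lt_last : i0 < last := Fin.lt_def.2 (by simp [last]; omega)
  have hi0_le_pred : i0 ≤ ⟨s.val - 1, Nat.lt_of_le_of_lt (Nat.sub_le _ _) s.isLt⟩ :=
    Fin.le_def.2 (by simp; omega)
  have hout : ∀ k ∉ A, m i0 ≤ m k := fun k hk =>
    hm.antitone (hi0max k (not_le.1 fun hsk => hk (hJA k hsk)) hk)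
  exact isLeast_martingaleMasses (hm hi0_lt_last) ((hm.antitone (hle_last s)).trans h2)
    (h1.le.trans (hm.antitone hi0_le_pred)) hi0A (hJA last (by simp [last]; omega))
    (fun k _ => hm.antitone (hle_last k)) hout
end

section
/- Under the hypotheses of the n-nomial model (n > 2, m₁ > ... > mₙ > 0, m_{s−1} > 1+r > m_s, 1+r ≠ mₙ), the lower envelope Q̲ of the set of martingale measures is a belief function (completely monotone capacity), i.e., its Möbius inverse is nonnegative on all subsets of Ω. -/
/-!
Write `c = 1 + r`; the up states `k < s` have `c < m k`, the down states `m k < c`. The lower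
probability of an event `A` is attained at a martingale measure supported on two states. If `A`
contains every up state it equals `(c - m j) / (m 0 - m j)`, where `j` is the first state missing
from `A`; symmetrically if `A` contains every down state; otherwise it is `0`. These are exactly
the values obtained by giving the focal set `Iio t` (`t` a down state) the mass
`Q̲(Iio t) - Q̲(Iio (t - 1))`, the focal set `Ioi t` (`t` an up state) the mass
`Q̲(Ioi t) - Q̲(Ioi (t + 1))`, and adding the masses of the focal sets contained in `A`. The masses
are nonnegative since `Q̲(Iio t)` increases and `Q̲(Ioi t)` decreases in `t`, and the Möbius
inverse of such a sum of masses at `A` is the mass of `A` itself.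
-/

open Finset

section Moebius

variable {α R : Type*} [DecidableEq α] [CommRing R]

def moebius (φ : Finset α → R) (A : Finset α) : R :=
  ∑ B ∈ A.powerset, (-1) ^ (#A - #B) * φ B

theorem sum_powerset_neg_one_pow_card_sub (X : Finset α) :
    ∑ C ∈ X.powerset, (-1 : R) ^ (#X - #C) = if X = ∅ then 1 else 0 := by
  have h := add_pow (1 : R) (-1) #X
  rw [add_neg_cancel, zero_pow_eq] at h
  simp only [one_pow, one_mul] at h
  rw [sum_powerset_apply_card (fun k => (-1 : R) ^ (#X - k))]
  simp only [nsmul_eq_mul, ← card_eq_zero, h]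
  exact sum_congr rfl fun k _ => mul_comm _ _

theorem moebius_ite_subset (F A : Finset α) :
    moebius (fun B => if F ⊆ B then (1 : R) else 0) A = if F = A then 1 else 0 := by
  simp only [moebius, mul_ite, mul_one, mul_zero, ← sum_filter]
  by_cases hFA : F ⊆ A
  · have hIcc : A.powerset.filter (F ⊆ ·) = (A \ F).powerset.image (F ∪ ·) := by
      rw [← Icc_eq_image_powerset hFA]
      ext B
      simp [and_comm]
    have hcard : ∀ C ∈ (A \ F).powerset, #A - #(F ∪ C) = #(A \ F) - #C := by
      intro C hC
      rw [mem_powerset] at hC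
      rw [card_union_of_disjoint (disjoint_of_subset_right hC disjoint_sdiff),
        card_sdiff_of_subset hFA]
      omega
    rw [hIcc, sum_image, sum_congr rfl fun C hC => by rw [hcard C hC],
      sum_powerset_neg_one_pow_card_sub]
    · refine if_congr (sdiff_eq_empty_iff_subset.trans ⟨subset_antisymm hFA, ?_⟩) rfl rfl
      rintro rfl
      exact subset_rfl
    · intro C hC D hD hCD
      rw [mem_coe, mem_powerset] at hC hD
      rw [← union_sdiff_cancel_left (disjoint_of_subset_right hC disjoint_sdiff),
        ← union_sdiff_cancel_left (disjoint_of_subset_right hD disjoint_sdiff)]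
      exact congrArg (· \ F) hCD
  · rw [if_neg (by rintro rfl; exact hFA subset_rfl), sum_eq_zero]
    intro B hB
    simp only [mem_filter, mem_powerset] at hB
    exact absurd (hB.2.trans hB.1) hFA

variable {ι : Type*} [Fintype ι]

def beliefOfMasses (w : ι → R) (F : ι → Finset α) (B : Finset α) : R :=
  ∑ t, if F t ⊆ B then w t else 0

theorem moebius_beliefOfMasses (w : ι → R) (F : ι → Finset α) (A : Finset α) :
    moebius (beliefOfMasses w F) A = ∑ t, if F t = A then w t else 0 := by
  have hφ : beliefOfMasses w F = fun B => ∑ t, w t * if F t ⊆ B then 1 else 0 := by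
    ext B
    simp only [beliefOfMasses, mul_ite, mul_one, mul_zero]
  simp only [hφ, moebius, mul_sum]
  rw [sum_comm]
  refine sum_congr rfl fun t _ => ?_
  simp only [mul_left_comm _ (w t), ← mul_sum]
  rw [← moebius, moebius_ite_subset, mul_ite, mul_one, mul_zero]

theorem moebius_beliefOfMasses_nonneg [PartialOrder R] [IsOrderedRing R] {w : ι → R}
    (hw : ∀ t, 0 ≤ w t) (F : ι → Finset α) (A : Finset α) :
    0 ≤ moebius (beliefOfMasses w F) A := by
  rw [moebius_beliefOfMasses]
  exact sum_nonneg fun t _ => by split_ifs; exacts [hw t, le_rfl]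

end Moebius

section Telescoping

variable {M : Type*} [AddCommGroup M] {n : ℕ}

theorem sum_fin_ite_le_sub_pred (f : ℕ → M) {j : ℕ} (hj : j < n) :
    ∑ t : Fin n, (if (t : ℕ) ≤ j then f t - f (t - 1) else 0) = f j - f 0 := by
  rw [Fin.sum_univ_eq_sum_range (fun k => if k ≤ j then f k - f (k - 1) else 0), ← sum_filter]
  have hfilter : (range n).filter (· ≤ j) = range (j + 1) := by
    ext k
    simp only [mem_filter, mem_range]
    omega
  rw [hfilter]
  simpa using sum_range_sub (fun k => f (k - 1)) (j + 1)

theorem sum_fin_ite_le_sub_succ (g : ℕ → M) {i : ℕ} (hi : i ≤ n) :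
    ∑ t : Fin n, (if i ≤ (t : ℕ) then g t - g (t + 1) else 0) = g i - g n := by
  rw [Fin.sum_univ_eq_sum_range (fun k => if i ≤ k then g k - g (k + 1) else 0), ← sum_filter]
  have hfilter : (range n).filter (i ≤ ·) = Ico i n := by
    ext k
    simp only [mem_filter, mem_range, mem_Ico]
    omega
  rw [hfilter, ← neg_sub (g n), ← sum_Ico_sub g hi, ← sum_neg_distrib]
  simp only [neg_sub]

end Telescoping

section Order

variable {α : Type*} [LinearOrder α] {A : Finset α}

theorem Iio_subset_iff_le [LocallyFiniteOrderBot α] {j : α} (hA : ∀ k < j, k ∈ A) (hj : j ∉ A)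
    (t : α) : Iio t ⊆ A ↔ t ≤ j :=
  ⟨fun h => not_lt.1 fun hjt => hj (h (mem_Iio.2 hjt)),
    fun h _ hk => hA _ ((mem_Iio.1 hk).trans_le h)⟩

theorem Ioi_subset_iff_le [LocallyFiniteOrderTop α] {i : α} (hA : ∀ k, i < k → k ∈ A) (hi : i ∉ A)
    (t : α) : Ioi t ⊆ A ↔ i ≤ t :=
  ⟨fun h => not_lt.1 fun hti => hi (h (mem_Ioi.2 hti)),
    fun h _ hk => hA _ (h.trans_lt (mem_Ioi.1 hk))⟩

end Order

section MartingaleMeasures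

variable {ι : Type*} [Fintype ι] {m : ι → ℝ} {c : ℝ} {A : Finset ι}

def martingaleProbs (m : ι → ℝ) (c : ℝ) (A : Finset ι) : Set ℝ :=
  {x | ∃ q : ι → ℝ, (∀ k, 0 ≤ q k) ∧ (∑ k, q k) = 1 ∧ (∑ k, m k * q k) = c ∧ x = ∑ k ∈ A, q k}

theorem martingaleProbs_neg : martingaleProbs (-m) (-c) A = martingaleProbs m c A := by
  ext x
  simp only [martingaleProbs, Pi.neg_apply, neg_mul, sum_neg_distrib, neg_inj]

theorem mem_martingaleProbs_twoPoint [DecidableEq ι] {i j : ι} (hj : m j < c) (hi : c < m i) :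
    (if i ∈ A then (c - m j) / (m i - m j) else 0) + (if j ∈ A then (m i - c) / (m i - m j) else 0)
      ∈ martingaleProbs m c A := by
  have hij : i ≠ j := by rintro rfl; linarith
  have hd : m i - m j ≠ 0 := by linarith
  refine ⟨Pi.single i ((c - m j) / (m i - m j)) + Pi.single j ((m i - c) / (m i - m j)),
    fun k => ?_, ?_, ?_, ?_⟩
  · simp only [Pi.add_apply, Pi.single_apply]
    have ha : 0 ≤ (c - m j) / (m i - m j) := div_nonneg (by linarith) (by linarith)
    have hb : 0 ≤ (m i - c) / (m i - m j) := div_nonneg (by linarith) (by linarith)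
    split_ifs <;> linarith
  · simp only [Pi.add_apply, sum_add_distrib, sum_pi_single', mem_univ, if_true]
    field_simp
    ring
  · simp only [Pi.add_apply, mul_add, sum_add_distrib, Pi.single_apply, mul_ite, mul_zero,
      sum_ite_eq', mem_univ, if_true]
    field_simp
    ring
  · simp only [Pi.add_apply, sum_add_distrib, sum_pi_single']

theorem sub_le_mul_of_mem_martingaleProbs {x M p : ℝ} (hx : x ∈ martingaleProbs m c A)
    (hM : ∀ k, m k ≤ M) (hp : ∀ k ∉ A, m k ≤ p) : c - p ≤ x * (M - p) := by
  classical
  obtain ⟨q, hq0, hq1, hqc, rfl⟩ := hx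
  calc c - p = ∑ k, (m k - p) * q k := by
        simp only [sub_mul, sum_sub_distrib, ← mul_sum, hq1, hqc, mul_one]
    _ ≤ ∑ k, if k ∈ A then q k * (M - p) else 0 := by
        refine sum_le_sum fun k _ => ?_
        split_ifs with hk
        · nlinarith [hM k, hq0 k]
        · nlinarith [hp k hk, hq0 k]
    _ = (∑ k ∈ A, q k) * (M - p) := by rw [sum_ite_mem, univ_inter, sum_mul]

theorem isLeast_martingaleProbs_top [DecidableEq ι] {t j : ι} (ht : t ∈ A) (htop : ∀ k, m k ≤ m t)
    (hj : j ∉ A) (hjmax : ∀ k ∉ A, m k ≤ m j) (hjc : m j < c) (hct : c < m t) :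
    IsLeast (martingaleProbs m c A) ((c - m j) / (m t - m j)) := by
  refine ⟨?_, fun x hx => ?_⟩
  · simpa [ht, hj] using mem_martingaleProbs_twoPoint (A := A) hjc hct
  · rw [div_le_iff₀ (by linarith)]
    exact sub_le_mul_of_mem_martingaleProbs hx htop hjmax

theorem isLeast_martingaleProbs_bot [DecidableEq ι] {b i : ι} (hb : b ∈ A) (hbot : ∀ k, m b ≤ m k)
    (hi : i ∉ A) (himin : ∀ k ∉ A, m i ≤ m k) (hbc : m b < c) (hci : c < m i) :
    IsLeast (martingaleProbs m c A) ((m i - c) / (m i - m b)) := by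
  have := isLeast_martingaleProbs_top (m := -m) (c := -c) hb (by simpa using hbot) hi
    (by simpa using himin) (by simpa using hci) (by simpa using hbc)
  simpa only [martingaleProbs_neg, Pi.neg_apply, neg_sub_neg] using this

theorem isLeast_martingaleProbs_zero [DecidableEq ι] {u d : ι} (hu : u ∉ A) (hd : d ∉ A)
    (hdc : m d < c) (hcu : c < m u) : IsLeast (martingaleProbs m c A) 0 := by
  refine ⟨?_, fun x ⟨q, hq0, _, _, hx⟩ => hx ▸ sum_nonneg fun k _ => hq0 k⟩
  simpa [hu, hd] using mem_martingaleProbs_twoPoint (A := A) hdc hcu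

theorem isLeast_martingaleProbs_univ (h : (martingaleProbs m c univ).Nonempty) :
    IsLeast (martingaleProbs m c univ) 1 := by
  obtain ⟨x, hx⟩ := h
  have hall : ∀ y ∈ martingaleProbs m c univ, y = 1 := fun y ⟨q, _, hq1, _, hy⟩ => hy.trans hq1
  exact ⟨hall x hx ▸ hx, fun y hy => (hall y hy).ge⟩

end MartingaleMeasures

theorem sub_div_sub_le_sub_div_sub {c M x y : ℝ} (hyx : y ≤ x) (hxc : x < c) (hcM : c < M) :
    (c - x) / (M - x) ≤ (c - y) / (M - y) := by
  rw [div_le_div_iff₀ (by linarith) (by linarith)]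
  nlinarith

section Model

open Fin.NatCast

variable {N : ℕ}

/-- For `j ≤ N`, `lowerProbIio m c s j` is the lower probability of `Iio j` and, for `i ≤ N`,
`lowerProbIoi m c s i` that of `Ioi i`. The casts `ℕ → Fin (N + 1)` wrap around, but larger
arguments only occur where the `if` gives `0`. -/
noncomputable def lowerProbIio (m : Fin (N + 1) → ℝ) (c : ℝ) (s j : ℕ) : ℝ :=
  if s ≤ j then (c - m (j : Fin (N + 1))) / (m 0 - m (j : Fin (N + 1))) else 0

noncomputable def lowerProbIoi (m : Fin (N + 1) → ℝ) (c : ℝ) (s i : ℕ) : ℝ :=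
  if i < s then (m (i : Fin (N + 1)) - c) / (m (i : Fin (N + 1)) - m (Fin.last N)) else 0

def focalSet : Fin (N + 1) ⊕ Fin (N + 1) → Finset (Fin (N + 1)) :=
  Sum.elim Iio Ioi

noncomputable def focalMass (m : Fin (N + 1) → ℝ) (c : ℝ) (s : ℕ) :
    Fin (N + 1) ⊕ Fin (N + 1) → ℝ :=
  Sum.elim (fun t => lowerProbIio m c s t - lowerProbIio m c s ((t : ℕ) - 1))
    (fun t => lowerProbIoi m c s t - lowerProbIoi m c s ((t : ℕ) + 1))

theorem lowerProbIio_of_lt {m : Fin (N + 1) → ℝ} {c : ℝ} {s j : ℕ} (hj : j < s) :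
    lowerProbIio m c s j = 0 :=
  if_neg (not_le.2 hj)

theorem lowerProbIoi_of_le {m : Fin (N + 1) → ℝ} {c : ℝ} {s i : ℕ} (hi : s ≤ i) :
    lowerProbIoi m c s i = 0 :=
  if_neg (not_lt.2 hi)

structure Straddles (m : Fin (N + 1) → ℝ) (c : ℝ) (s : ℕ) : Prop where
  antitone : Antitone m
  pos : 0 < s
  le : s ≤ N
  up : ∀ k : Fin (N + 1), (k : ℕ) < s → c < m k
  down : ∀ k : Fin (N + 1), s ≤ (k : ℕ) → m k < c

namespace Straddles

variable {m : Fin (N + 1) → ℝ} {c : ℝ} {s : ℕ}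

theorem lt_top (h : Straddles m c s) : c < m 0 := h.up 0 h.pos

theorem bot_lt (h : Straddles m c s) : m (Fin.last N) < c := h.down _ h.le

theorem lowerProbIio_mono (h : Straddles m c s) {k l : ℕ} (hkl : k ≤ l) (hl : l ≤ N) :
    lowerProbIio m c s k ≤ lowerProbIio m c s l := by
  have hml : m (l : Fin (N + 1)) ≤ m k := h.antitone (Fin.natCast_mono hl hkl)
  have hlc (hsl : s ≤ l) : m (l : Fin (N + 1)) < c :=
    h.down _ (by rwa [Fin.val_cast_of_lt (by omega)])
  unfold lowerProbIio
  split_ifs with hsk hsl hsl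
  · exact sub_div_sub_le_sub_div_sub hml (h.down _ (by rwa [Fin.val_cast_of_lt (by omega)]))
      h.lt_top
  · omega
  · exact div_nonneg (by linarith [hlc hsl]) (by linarith [hlc hsl, h.lt_top])
  · exact le_rfl

theorem lowerProbIoi_anti (h : Straddles m c s) {k l : ℕ} (hkl : k ≤ l) :
    lowerProbIoi m c s l ≤ lowerProbIoi m c s k := by
  have hkc (hks : k < s) : c < m (k : Fin (N + 1)) :=
    h.up _ (by rwa [Fin.val_cast_of_lt (by linarith [h.le])])
  unfold lowerProbIoi
  split_ifs with hls hks hks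
  · have hml : m (l : Fin (N + 1)) ≤ m k :=
      h.antitone (Fin.natCast_mono (by linarith [h.le]) hkl)
    have hlc : c < m (l : Fin (N + 1)) := h.up _ (by rwa [Fin.val_cast_of_lt (by linarith [h.le])])
    have := sub_div_sub_le_sub_div_sub (c := -c) (M := -m (Fin.last N)) (neg_le_neg hml)
      (neg_lt_neg hlc) (neg_lt_neg h.bot_lt)
    simpa only [neg_sub_neg] using this
  · omega
  · exact div_nonneg (by linarith [hkc hks]) (by linarith [hkc hks, h.bot_lt])
  · exact le_rfl

theorem focalMass_nonneg (h : Straddles m c s) : ∀ t, 0 ≤ focalMass m c s t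
  | .inl t => sub_nonneg.2 (h.lowerProbIio_mono (Nat.sub_le _ _) (Fin.is_le t))
  | .inr _ => sub_nonneg.2 (h.lowerProbIoi_anti (Nat.le_succ _))

theorem lowerProbIio_last_add_lowerProbIoi_zero (h : Straddles m c s) :
    lowerProbIio m c s N + lowerProbIoi m c s 0 = 1 := by
  have hd : m 0 - m (Fin.last N) ≠ 0 := by linarith [h.lt_top, h.bot_lt]
  rw [lowerProbIio, lowerProbIoi, if_pos h.le, if_pos h.pos, Fin.natCast_eq_last, Nat.cast_zero,
    div_add_div _ _ hd hd, div_eq_one_iff_eq (mul_ne_zero hd hd)]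
  ring

theorem beliefOfMasses_univ (h : Straddles m c s) :
    beliefOfMasses (focalMass m c s) focalSet univ =
      lowerProbIio m c s N + lowerProbIoi m c s 0 := by
  have hIio := sum_fin_ite_le_sub_pred (lowerProbIio m c s) (Nat.lt_succ_self N)
  have hIoi := sum_fin_ite_le_sub_succ (lowerProbIoi m c s) (Nat.zero_le (N + 1))
  simp only [Fin.is_le, Nat.zero_le, if_true] at hIio hIoi
  simp only [beliefOfMasses, Fintype.sum_sum_type, focalSet, focalMass, Sum.elim_inl,
    Sum.elim_inr, subset_univ, if_true, hIio, hIoi, lowerProbIio_of_lt h.pos,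
    lowerProbIoi_of_le (h.le.trans (Nat.le_succ N))]
  ring

theorem beliefOfMasses_eq {A : Finset (Fin (N + 1))} {i j : Fin (N + 1)} (hj : j ∉ A)
    (hjmin : ∀ k < j, k ∈ A) (hi : i ∉ A) (himax : ∀ k, i < k → k ∈ A) (h : Straddles m c s) :
    beliefOfMasses (focalMass m c s) focalSet A =
      lowerProbIio m c s j + lowerProbIoi m c s i := by
  simp only [beliefOfMasses, Fintype.sum_sum_type, focalSet, focalMass, Sum.elim_inl,
    Sum.elim_inr, Iio_subset_iff_le hjmin hj, Ioi_subset_iff_le himax hi, Fin.le_def]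
  rw [sum_fin_ite_le_sub_pred _ j.isLt, sum_fin_ite_le_sub_succ _ i.isLt.le,
    lowerProbIio_of_lt h.pos, lowerProbIoi_of_le (h.le.trans (Nat.le_succ N))]
  ring

theorem isLeast_martingaleProbs_beliefOfMasses (h : Straddles m c s) (A : Finset (Fin (N + 1))) :
    IsLeast (martingaleProbs m c A) (beliefOfMasses (focalMass m c s) focalSet A) := by
  by_cases hA : A = univ
  · subst hA
    rw [h.beliefOfMasses_univ, h.lowerProbIio_last_add_lowerProbIoi_zero]
    exact isLeast_martingaleProbs_univ ⟨_, mem_martingaleProbs_twoPoint h.bot_lt h.lt_top⟩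
  have hne : Aᶜ.Nonempty := nonempty_iff_ne_empty.2 (by rwa [Ne, compl_eq_empty_iff])
  obtain ⟨j, hj, hjmin⟩ : ∃ j ∉ A, ∀ k < j, k ∈ A :=
    ⟨Aᶜ.min' hne, mem_compl.1 (Aᶜ.min'_mem hne),
      fun k hk => by_contra fun hkA => not_lt_of_ge (Aᶜ.min'_le k (mem_compl.2 hkA)) hk⟩
  obtain ⟨i, hi, himax⟩ : ∃ i ∉ A, ∀ k, i < k → k ∈ A :=
    ⟨Aᶜ.max' hne, mem_compl.1 (Aᶜ.max'_mem hne),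
      fun k hk => by_contra fun hkA => not_lt_of_ge (Aᶜ.le_max' k (mem_compl.2 hkA)) hk⟩
  have hji : j ≤ i := not_lt.1 fun hij => hi (hjmin i hij)
  rw [h.beliefOfMasses_eq hj hjmin hi himax]
  rcases le_or_gt s j with hsj | hjs
  · rw [lowerProbIoi_of_le (hsj.trans hji), add_zero, lowerProbIio, if_pos hsj,
      Fin.cast_val_eq_self]
    exact isLeast_martingaleProbs_top (hjmin 0 (Fin.lt_def.2 (h.pos.trans_le hsj)))
      (fun k => h.antitone (Fin.zero_le k)) hj
      (fun k hk => h.antitone (not_lt.1 fun hkj => hk (hjmin k hkj))) (h.down j hsj) h.lt_top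
  rcases lt_or_ge (i : ℕ) s with his | hsi
  · rw [lowerProbIio_of_lt hjs, zero_add, lowerProbIoi, if_pos his, Fin.cast_val_eq_self]
    exact isLeast_martingaleProbs_bot (himax (Fin.last N) (Fin.lt_def.2 (his.trans_le h.le)))
      (fun k => h.antitone (Fin.le_last k)) hi
      (fun k hk => h.antitone (not_lt.1 fun hik => hk (himax k hik))) h.bot_lt (h.up i his)
  · rw [lowerProbIio_of_lt hjs, lowerProbIoi_of_le hsi, add_zero]
    exact isLeast_martingaleProbs_zero hj hi (h.down i hsi) (h.up j hjs)

end Straddles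

end Model

/-- The lower envelope of the set of martingale measures in the n-nomial model is a
belief function: its Möbius inverse is nonnegative on every subset of `Ω`. -/
theorem lower_envelope_is_belief_function (n : ℕ) (m : Fin n → ℝ)
    (hm : StrictAnti m) (r : ℝ)
    (s : Fin n) (hs : 1 ≤ s.val)
    (h1 : 1 + r < m ⟨s.val - 1, Nat.lt_of_le_of_lt (Nat.sub_le _ _) s.isLt⟩)
    (h2 : m s < 1 + r)
    (Qlow : Finset (Fin n) → ℝ)
    (hQlow : ∀ A : Finset (Fin n),
      IsLeast {x : ℝ | ∃ q : Fin n → ℝ, (∀ k, 0 ≤ q k) ∧ (∑ k, q k) = 1 ∧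
        (∑ k, m k * q k) = 1 + r ∧ x = ∑ k ∈ A, q k} (Qlow A)) :
    ∀ A : Finset (Fin n),
      0 ≤ ∑ B ∈ A.powerset, (-1 : ℝ) ^ (A.card - B.card) * Qlow B := by
  obtain ⟨N, rfl⟩ : ∃ N, n = N + 1 := ⟨n - 1, by have := s.isLt; omega⟩
  have hstr : Straddles m (1 + r) s :=
    { antitone := hm.antitone
      pos := hs
      le := Nat.lt_succ_iff.1 s.isLt
      up := fun k hk => h1.trans_le (hm.antitone (Fin.le_def.2 (Nat.le_sub_one_of_lt hk)))
      down := fun k hk => (hm.antitone (Fin.le_def.2 hk)).trans_lt h2 }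
  have hQ : Qlow = beliefOfMasses (focalMass m (1 + r) s) focalSet :=
    funext fun A => (hQlow A).unique (hstr.isLeast_martingaleProbs_beliefOfMasses A)
  intro A
  rw [hQ]
  exact moebius_beliefOfMasses_nonneg hstr.focalMass_nonneg focalSet A
end

section
/- A nonnegative Möbius inverse μ: 𝒫(Ω) → ℝ≥0 with μ(∅)=0, Σ_A μ(A) = 1, whose focal sets {A : μ(A) > 0} form a chain under set inclusion, induces a capacity φ(A) = Σ_{B ⊆ A} μ(B) that is a necessity measure, i.e., φ(A∩B) = min{φ(A), φ(B)} for all A, B ⊆ Ω. -/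
open Finset

namespace Finset

variable {α : Type*} [DecidableEq α] (μ : Finset α → ℝ)

theorem sum_powerset_inter_eq_left {A B : Finset α} (h : ∀ C ⊆ A, μ C ≠ 0 → C ⊆ B) :
    ∑ C ∈ (A ∩ B).powerset, μ C = ∑ C ∈ A.powerset, μ C := by
  refine sum_subset (powerset_mono.mpr inter_subset_left) fun C hCA hCAB => ?_
  by_contra hC
  rw [mem_powerset] at hCA
  exact hCAB (mem_powerset.mpr (subset_inter hCA (h C hCA hC)))

theorem sum_powerset_inter_eq_min_of_forall_subset (hnn : ∀ C, 0 ≤ μ C) {A B : Finset α}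
    (h : ∀ C ⊆ A, 0 < μ C → C ⊆ B) :
    ∑ C ∈ (A ∩ B).powerset, μ C = min (∑ C ∈ A.powerset, μ C) (∑ C ∈ B.powerset, μ C) := by
  have hA := sum_powerset_inter_eq_left μ fun C hCA hC => h C hCA ((hnn C).lt_of_ne' hC)
  rw [hA, min_eq_left]
  rw [← hA]
  exact sum_le_sum_of_subset_of_nonneg (powerset_mono.mpr inter_subset_right)
    fun C _ _ => hnn C

theorem forall_subset_or_forall_subset_of_chain
    (hchain : ∀ A B : Finset α, 0 < μ A → 0 < μ B → A ⊆ B ∨ B ⊆ A) (A B : Finset α) :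
    (∀ C ⊆ A, 0 < μ C → C ⊆ B) ∨ (∀ C ⊆ B, 0 < μ C → C ⊆ A) := by
  by_contra! ⟨⟨C, hCA, hC, hCB⟩, ⟨D, hDB, hD, hDA⟩⟩
  rcases hchain C D hC hD with hCD | hDC
  · exact hCB (hCD.trans hDB)
  · exact hDA (hDC.trans hCA)

end Finset

theorem chain_mobius_induces_necessity_general {Ω : Type*} [DecidableEq Ω]
    (μ : Finset Ω → ℝ)
    (hnn : ∀ A : Finset Ω, 0 ≤ μ A)
    (hchain : ∀ A B : Finset Ω, 0 < μ A → 0 < μ B → A ⊆ B ∨ B ⊆ A) :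
    ∀ A B : Finset Ω,
      (∑ C ∈ (A ∩ B).powerset, μ C) =
        min (∑ C ∈ A.powerset, μ C) (∑ C ∈ B.powerset, μ C) := by
  intro A B
  rcases forall_subset_or_forall_subset_of_chain μ hchain A B with h | h
  · exact sum_powerset_inter_eq_min_of_forall_subset μ hnn h
  · rw [inter_comm, min_comm]
    exact sum_powerset_inter_eq_min_of_forall_subset μ hnn h

/-- A nonnegative Möbius inverse with total mass one whose focal sets form a chain
under inclusion induces a necessity measure. -/
theorem chain_mobius_induces_necessity {Ω : Type*} [Fintype Ω] [DecidableEq Ω]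
    [Nonempty Ω] (μ : Finset Ω → ℝ)
    (hnn : ∀ A : Finset Ω, 0 ≤ μ A) (h0 : μ ∅ = 0)
    (hsum : (∑ A : Finset Ω, μ A) = 1)
    (hchain : ∀ A B : Finset Ω, 0 < μ A → 0 < μ B → A ⊆ B ∨ B ⊆ A) :
    ∀ A B : Finset Ω,
      (∑ C ∈ (A ∩ B).powerset, μ C) =
        min (∑ C ∈ A.powerset, μ C) (∑ C ∈ B.powerset, μ C) :=
  chain_mobius_induces_necessity_general μ hnn hchain
end

section
/- Let Ω be finite, Ω = {1,...,n}, 𝒰 the collection of nonempty subsets of Ω, and S¹,...,Sᵐ: Ω → ℝ with lower prices π̲(Sᵏ) ∈ ℝ. For X: Ω → ℝ write X^ℓ(B) = min_{i∈B} X(i). Then there exists a belief function B̂el on 𝒫(Ω) with Choquet integral ℂ_{B̂el}(Sᵏ) = π̲(Sᵏ) for all k = 1,...,m if and only if for every λ ∈ ℝᵐ, min_{B∈𝒰} Σₖ λₖ((Sᵏ)^ℓ(B) − π̲(Sᵏ)) ≤ 0 ≤ max_{B∈𝒰} Σₖ λₖ((Sᵏ)^ℓ(B) − π̲(Sᵏ)).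 -/
/-!
A belief function is a convex combination, with its Möbius masses as weights, of the unanimity
games of the nonempty events `B`, and the Choquet integral is affine in these weights. So the
attainable vectors of Choquet integrals of `(Sᵏ)ₖ` form the convex hull of the lower envelopes
`((Sᵏ)^ℓ(B))ₖ`, `B ≠ ∅`. By Hahn–Banach, `π̲` lies in this hull iff no linear functional `λ` is
strictly smaller at `π̲` than at every lower envelope, i.e. iff no portfolio `λ` has a strictly
positive gain on every nonempty event; applied to `-λ`, this is the two-sided condition.
-/

open Finset Matrix

section ConvexHull

variable {R E α : Type*} [Field R] [LinearOrder R] [IsStrictOrderedRing R]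
  [AddCommGroup E] [Module R E]

theorem mem_convexHull_image_iff_exists_weights [Fintype α] (g : α → E) (t : Set α) (x : E) :
    x ∈ convexHull R (g '' t) ↔ ∃ w : α → R, (∀ a, 0 ≤ w a) ∧ (∀ a ∉ t, w a = 0) ∧
      ∑ a, w a = 1 ∧ ∑ a, w a • g a = x := by
  classical
  constructor
  · rw [mem_convexHull_iff_exists_fintype]
    rintro ⟨κ, _, w, z, hw₀, hw₁, hz, rfl⟩
    choose c hct hcz using hz
    refine ⟨fun a ↦ ∑ i with c i = a, w i, fun a ↦ sum_nonneg fun i _ ↦ hw₀ i,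
      fun a ha ↦ sum_eq_zero fun i hi ↦ absurd ((mem_filter.1 hi).2 ▸ hct i) ha,
      (sum_fiberwise univ c w).trans hw₁, ?_⟩
    simp_rw [← hcz, sum_smul, ← sum_fiberwise univ c (fun i ↦ w i • g (c i))]
    exact sum_congr rfl fun a _ ↦ sum_congr rfl fun i hi ↦ by rw [(mem_filter.1 hi).2]
  · rintro ⟨w, hw₀, hwt, hw₁, rfl⟩
    have hsupp : ∀ f : α → E, (∀ a ∉ t, f a = 0) → ∑ a with a ∈ t, f a = ∑ a, f a :=
      fun f hf ↦ sum_filter_of_ne fun a _ hfa ↦ by_contra fun ha ↦ hfa (hf a ha)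
    rw [← hsupp _ fun a ha ↦ by rw [hwt a ha, zero_smul]]
    refine (convex_convexHull R _).sum_mem (fun a _ ↦ hw₀ a) ?_
      fun a ha ↦ subset_convexHull R _ ⟨a, (mem_filter.1 ha).2, rfl⟩
    rwa [sum_filter_of_ne fun a _ hwa ↦ by_contra fun ha ↦ hwa (hwt a ha)]

end ConvexHull

section Separation

variable {E : Type*} [TopologicalSpace E] [AddCommGroup E] [IsTopologicalAddGroup E] [Module ℝ E]
  [ContinuousSMul ℝ E] [LocallyConvexSpace ℝ E]

theorem mem_convexHull_iff_forall_exists_le {s : Set E} (hs : IsClosed (convexHull ℝ s)) {x : E} :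
    x ∈ convexHull ℝ s ↔ ∀ f : StrongDual ℝ E, ∃ y ∈ s, f y ≤ f x := by
  refine ⟨fun hx f ↦ (f.toLinearMap.concaveOn convex_univ).exists_le_of_mem_convexHull
    (Set.subset_univ _) hx, fun h ↦ by_contra fun hx ↦ ?_⟩
  obtain ⟨f, u, hfs, hux⟩ := geometric_hahn_banach_closed_point (convex_convexHull ℝ s) hs hx
  obtain ⟨y, hy, hfy⟩ := h (-f)
  have hfxy : f x ≤ f y := neg_le_neg_iff.1 hfy
  exact (hux.trans_le hfxy).not_gt (hfs y (subset_convexHull ℝ s hy))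

end Separation

theorem mem_convexHull_iff_forall_exists_dotProduct_le {ι : Type*} [Fintype ι] [DecidableEq ι]
    {s : Set (ι → ℝ)} (hs : IsClosed (convexHull ℝ s)) {x : ι → ℝ} :
    x ∈ convexHull ℝ s ↔ ∀ lam : ι → ℝ, ∃ y ∈ s, lam ⬝ᵥ y ≤ lam ⬝ᵥ x := by
  rw [mem_convexHull_iff_forall_exists_le hs,
    ← (dotProductEquiv ℝ ι ≪≫ₗ LinearMap.toContinuousLinearMap).forall_congr_right]
  rfl

/-- `B ↦ ((Sᵏ)^ℓ(B))ₖ`; the value `0` at `B = ∅` is junk. -/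
noncomputable def lowerEnvelope {Ω K : Type*} (S : K → Ω → ℝ) (B : Finset Ω) : K → ℝ :=
  fun k ↦ if h : B.Nonempty then B.inf' h (S k) else 0

theorem dotProduct_lowerEnvelope_sub {Ω K : Type*} [Fintype K] (S : K → Ω → ℝ) (π lam : K → ℝ)
    {B : Finset Ω} (hB : B.Nonempty) :
    lam ⬝ᵥ lowerEnvelope S B - lam ⬝ᵥ π = ∑ k, lam k * (B.inf' hB (S k) - π k) := by
  simp only [dotProduct, lowerEnvelope, dif_pos hB, mul_sub, sum_sub_distrib]

theorem exists_lowerEnvelope_dotProduct_le_iff {Ω K : Type*} [Fintype K] (S : K → Ω → ℝ)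
    (π lam : K → ℝ) :
    (∃ y ∈ lowerEnvelope S '' {B | B.Nonempty}, lam ⬝ᵥ y ≤ lam ⬝ᵥ π) ↔
      ∃ B : Finset Ω, ∃ hB : B.Nonempty, ∑ k, lam k * (B.inf' hB (S k) - π k) ≤ 0 := by
  rw [Set.exists_mem_image]
  refine exists_congr fun B ↦ ⟨fun ⟨hB, h⟩ ↦ ⟨hB, ?_⟩, fun ⟨hB, h⟩ ↦ ⟨hB, ?_⟩⟩
  · rwa [← dotProduct_lowerEnvelope_sub S π lam hB, sub_nonpos]
  · rwa [← dotProduct_lowerEnvelope_sub S π lam hB, sub_nonpos] at h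

theorem exists_mobius_mass_iff_mem_convexHull {Ω K : Type*} [Fintype Ω] (S : K → Ω → ℝ)
    (π : K → ℝ) :
    (∃ μ : Finset Ω → ℝ, (∀ B, 0 ≤ μ B) ∧ μ ∅ = 0 ∧ ∑ B, μ B = 1 ∧
      ∀ k, ∑ B, lowerEnvelope S B k * μ B = π k) ↔
    π ∈ convexHull ℝ (lowerEnvelope S '' {B | B.Nonempty}) := by
  rw [mem_convexHull_image_iff_exists_weights]
  refine exists_congr fun μ ↦ and_congr_right' (and_congr ?_ (and_congr_right' ?_))
  · simp only [Set.mem_ofPred_eq, not_nonempty_iff_eq_empty, forall_eq]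
  · simp only [funext_iff, Finset.sum_apply, Pi.smul_apply, smul_eq_mul, mul_comm]

theorem generalized_dutch_book_general (n mkt : ℕ)
    (S : Fin mkt → Fin n → ℝ) (π : Fin mkt → ℝ) :
    (∃ μ : Finset (Fin n) → ℝ,
      (∀ B, 0 ≤ μ B) ∧ μ ∅ = 0 ∧ (∑ B : Finset (Fin n), μ B) = 1 ∧
      ∀ k, (∑ B : Finset (Fin n),
        (if h : B.Nonempty then B.inf' h (S k) else 0) * μ B) = π k) ↔
    (∀ lam : Fin mkt → ℝ,
      (∃ B : Finset (Fin n), ∃ hB : B.Nonempty,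
        (∑ k, lam k * (B.inf' hB (S k) - π k)) ≤ 0) ∧
      (∃ B : Finset (Fin n), ∃ hB : B.Nonempty,
        0 ≤ ∑ k, lam k * (B.inf' hB (S k) - π k))) := by
  refine (exists_mobius_mass_iff_mem_convexHull S π).trans ?_
  rw [mem_convexHull_iff_forall_exists_dotProduct_le
    ((Set.toFinite _).isCompact_convexHull (𝕜 := ℝ)).isClosed]
  simp only [exists_lowerEnvelope_dotProduct_le_iff]
  refine ⟨fun h lam ↦ ⟨h lam, ?_⟩, fun h lam ↦ (h lam).1⟩
  obtain ⟨B, hB, hgain⟩ := h (-lam)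
  refine ⟨B, hB, ?_⟩
  simpa only [Pi.neg_apply, neg_mul, sum_neg_distrib, neg_nonpos] using hgain

/-- Generalized avoiding Dutch book theorem: there exists a belief function whose
Choquet integrals agree with the lower prices `π̲(Sᵏ)` iff every portfolio `λ` has a
nonpositive gain on some nonempty event and a nonnegative gain on some nonempty event. -/
theorem generalized_dutch_book (n mkt : ℕ) (hn : 0 < n)
    (S : Fin mkt → Fin n → ℝ) (π : Fin mkt → ℝ) :
    (∃ μ : Finset (Fin n) → ℝ,
      (∀ B, 0 ≤ μ B) ∧ μ ∅ = 0 ∧ (∑ B : Finset (Fin n), μ B) = 1 ∧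
      ∀ k, (∑ B : Finset (Fin n),
        (if h : B.Nonempty then B.inf' h (S k) else 0) * μ B) = π k) ↔
    (∀ lam : Fin mkt → ℝ,
      (∃ B : Finset (Fin n), ∃ hB : B.Nonempty,
        (∑ k, lam k * (B.inf' hB (S k) - π k)) ≤ 0) ∧
      (∃ B : Finset (Fin n), ∃ hB : B.Nonempty,
        0 ≤ ∑ k, lam k * (B.inf' hB (S k) - π k))) :=
  generalized_dutch_book_general n mkt S π
end

section
/- Every feasible solution of the strong martingale inner approximation problem is a probability measure: if a belief function B̂el on 𝒫(Ω) with Möbius inverse μ̂ satisfies both Σᵢ mᵢ (Σ_{{i}⊆B⊆{1,...,i}} μ̂(B)) = 1+r and Σᵢ mᵢ (Σ_{{i}⊆B⊆{i,...,n}} μ̂(B)) = 1+r, where m₁ > ... > mₙ, then μ̂(B) = 0 for every B with |B| ≥ 2, i.e., B̂el is additive (a probability measure) satisfying the martingale condition Σᵢ mᵢ μ̂({i}) = 1+r. -/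
/-!
Exchanging the order of summation, the two equations read
`∑_B μ B * m (max B) = 1 + r = ∑_B μ B * m (min B)`.
As `m` is strictly decreasing, `m (max B) ≤ m (min B)`, strictly as soon as `B` has two elements,
so the nonnegative weights `μ B` must vanish on those `B`. Only singletons are then left in the
first equation, which becomes the martingale condition.
-/

open Finset

namespace Finset

section Swap

variable {α R : Type*} [Fintype α] [NonUnitalNonAssocSemiring R]

theorem sum_mul_sum_eq_sum_dite_mul {T : α → Finset (Finset α)}
    {a : ∀ B : Finset α, B.Nonempty → α} (hT : ∀ i B, B ∈ T i ↔ ∃ h, a B h = i)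
    (f : α → R) (g : Finset α → R) :
    ∑ i, f i * ∑ B ∈ T i, g B = ∑ B, (if h : B.Nonempty then f (a B h) else 0) * g B := by
  simp only [mul_sum]
  rw [sum_comm' (t' := univ) (s' := fun B => if h : B.Nonempty then {a B h} else ∅)]
  · refine sum_congr rfl fun B _ => ?_
    split_ifs <;> simp
  · intro i B
    split_ifs with h <;> simp [hT, h, eq_comm]

end Swap

section LinearOrder

variable {α : Type*} [LinearOrder α]

theorem mem_filter_powerset_Iic_iff [LocallyFiniteOrderBot α] {i : α} {B : Finset α} :
    B ∈ (Iic i).powerset.filter (i ∈ ·) ↔ ∃ h : B.Nonempty, B.max' h = i := by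
  simp only [mem_filter, mem_powerset, subset_iff, mem_Iic, max'_eq_iff]
  exact ⟨fun ⟨hle, hi⟩ => ⟨⟨i, hi⟩, hi, hle⟩, fun ⟨_, hi, hle⟩ => ⟨hle, hi⟩⟩

theorem mem_filter_powerset_Ici_iff [LocallyFiniteOrderTop α] {i : α} {B : Finset α} :
    B ∈ (Ici i).powerset.filter (i ∈ ·) ↔ ∃ h : B.Nonempty, B.min' h = i := by
  simp only [mem_filter, mem_powerset, subset_iff, mem_Ici, min'_eq_iff]
  exact ⟨fun ⟨hle, hi⟩ => ⟨⟨i, hi⟩, hi, hle⟩, fun ⟨_, hi, hle⟩ => ⟨hle, hi⟩⟩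

end LinearOrder

theorem eq_zero_of_sum_mul_eq_sum_mul {ι R : Type*} [Ring R] [LinearOrder R]
    [IsStrictOrderedRing R] {s : Finset ι} {a b μ : ι → R} (hab : ∀ i ∈ s, a i ≤ b i)
    (hμ : ∀ i ∈ s, 0 ≤ μ i) (h : ∑ i ∈ s, a i * μ i = ∑ i ∈ s, b i * μ i)
    {i : ι} (hi : i ∈ s) (hlt : a i < b i) : μ i = 0 := by
  have hgap : ∑ j ∈ s, (b j - a j) * μ j = 0 := by
    simp only [sub_mul, sum_sub_distrib, h, sub_self]
  have hgap_i := (sum_eq_zero_iff_of_nonneg fun j hj =>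
    mul_nonneg (sub_nonneg.2 (hab j hj)) (hμ j hj)).1 hgap i hi
  exact (mul_eq_zero.1 hgap_i).resolve_left (sub_pos.2 hlt).ne'

end Finset

theorem Fintype.sum_finset_eq_sum_singleton {α M : Type*} [Fintype α] [DecidableEq α]
    [AddCommMonoid M] {F : Finset α → M} (hF : ∀ B : Finset α, B.card ≠ 1 → F B = 0) :
    ∑ B, F B = ∑ a, F {a} := by
  rw [← Finset.sum_subset (subset_univ (powersetCard 1 univ)) fun B _ hB => hF B (by simpa using hB),
    powersetCard_one, sum_map]
  rfl

theorem StrictAnti.eq_zero_of_sum_max'_mul_eq_sum_min'_mul {α R : Type*} [LinearOrder α]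
    [Fintype α] [Ring R] [LinearOrder R] [IsStrictOrderedRing R] {m : α → R} (hm : StrictAnti m)
    {μ : Finset α → R} (hμ : ∀ B, 0 ≤ μ B)
    (h : ∑ B, (if h : B.Nonempty then m (B.max' h) else 0) * μ B =
      ∑ B, (if h : B.Nonempty then m (B.min' h) else 0) * μ B)
    {B : Finset α} (hB : 2 ≤ B.card) : μ B = 0 := by
  refine eq_zero_of_sum_mul_eq_sum_mul (fun C _ => ?_) (fun C _ => hμ C) h (mem_univ B) ?_
  · split_ifs with hC
    exacts [hm.antitone (min'_le_max' C hC), le_rfl]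
  · have hne : B.Nonempty := card_pos.1 (by omega)
    rw [dif_pos hne, dif_pos hne]
    exact hm (min'_lt_max'_of_card B hB)

theorem strong_martingale_is_probability_general (n : ℕ)
    (m : Fin n → ℝ) (hm : StrictAnti m) (r : ℝ)
    (μ : Finset (Fin n) → ℝ)
    (hnn : ∀ B, 0 ≤ μ B)
    (h1 : (∑ i : Fin n,
      m i * ∑ B ∈ (Finset.Iic i).powerset.filter (fun B => i ∈ B), μ B) = 1 + r)
    (h2 : (∑ i : Fin n,
      m i * ∑ B ∈ (Finset.Ici i).powerset.filter (fun B => i ∈ B), μ B) = 1 + r) :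
    (∀ B : Finset (Fin n), 2 ≤ B.card → μ B = 0) ∧
    (∑ i : Fin n, m i * μ {i}) = 1 + r := by
  rw [sum_mul_sum_eq_sum_dite_mul fun _ _ => mem_filter_powerset_Iic_iff] at h1
  rw [sum_mul_sum_eq_sum_dite_mul fun _ _ => mem_filter_powerset_Ici_iff] at h2
  have hsupp : ∀ B : Finset (Fin n), 2 ≤ B.card → μ B = 0 := fun _ =>
    hm.eq_zero_of_sum_max'_mul_eq_sum_min'_mul hnn (h1.trans h2.symm)
  refine ⟨hsupp, ?_⟩
  rw [← h1, Fintype.sum_finset_eq_sum_singleton]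
  · simp
  · intro B hB
    obtain hB0 | hB2 : B.card = 0 ∨ 2 ≤ B.card := by omega
    · simp [card_eq_zero.1 hB0]
    · simp [hsupp B hB2]

/-- Every feasible solution of the strong martingale inner approximation problem is a
probability measure: if the Möbius inverse `μ̂` of a belief function satisfies both
martingale equations (for `S₁/S₀` and `-S₁/S₀`), then `μ̂` vanishes on all sets of
cardinality at least two and satisfies the classical martingale condition. -/
theorem strong_martingale_is_probability (n : ℕ) (hn : 0 < n)
    (m : Fin n → ℝ) (hm : StrictAnti m) (hmpos : ∀ k, 0 < m k) (r : ℝ)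
    (μ : Finset (Fin n) → ℝ)
    (hnn : ∀ B, 0 ≤ μ B) (h0 : μ ∅ = 0)
    (hsum : (∑ B : Finset (Fin n), μ B) = 1)
    (h1 : (∑ i : Fin n,
      m i * ∑ B ∈ (Finset.Iic i).powerset.filter (fun B => i ∈ B), μ B) = 1 + r)
    (h2 : (∑ i : Fin n,
      m i * ∑ B ∈ (Finset.Ici i).powerset.filter (fun B => i ∈ B), μ B) = 1 + r) :
    (∀ B : Finset (Fin n), 2 ≤ B.card → μ B = 0) ∧
    (∑ i : Fin n, m i * μ {i}) = 1 + r :=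
  strong_martingale_is_probability_general n m hm r μ hnn h1 h2
end
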